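/- (Corollary 6.) Let Z be a finite alphabet with |Z| ≥ 1, let H be a finite alphabet, m ≥ 1, and let Q be a learning kernel from Z^m to pmfs on H that is invariant under permutations of the training set. Then for every probability mass function P on Z, the mutual affinity satisfies I_P(Z_trn, H) ≤ √(|Z|·log(1+m)/(2m)) (logarithm in nats); hence the learning capacity satisfies C^(m) ≤ √(|Z|·log(1+m)/(2m)). -/

import Mathlib

/-- Total variation distance between two pmfs: `1 - ∑ min`. -/
noncomputable def tv {A : Type*} (p q : A → ℝ) : ℝ := 1 - ∑' a, min (p a) (q a)

/-- `p` is a probability mass function: nonnegative and summing to `1`. -/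
def IsPMF {A : Type*} (p : A → ℝ) : Prop := (∀ a, 0 ≤ p a) ∧ HasSum p 1

/-- Product pmf `P^{⊗m}` of `m` i.i.d. draws from `P`. -/
noncomputable def prodPMF {Z : Type*} (m : ℕ) (P : Z → ℝ) (S : Fin m → Z) : ℝ :=
  ∏ i, P (S i)

/-- Joint pmf of a uniformly drawn training example `Z_trn` and the inferred
hypothesis `H`: `μ(z,h) = ∑_S P^{⊗m}(S) · (1/m)∑_i 1{S_i = z} · Q(h|S)`. -/
noncomputable def jointZH {Z H : Type*} (m : ℕ) (P : Z → ℝ)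
    (Q : (Fin m → Z) → H → ℝ) (z : Z) (h : H) : ℝ :=
  haveI := Classical.decEq Z
  ∑' S : Fin m → Z,
    prodPMF m P S * ((1 / (m : ℝ)) * ∑ i, if S i = z then (1 : ℝ) else 0) * Q S h

/-- Marginal of `Z_trn` under the joint pmf `jointZH`. -/
noncomputable def margZ {Z H : Type*} (m : ℕ) (P : Z → ℝ)
    (Q : (Fin m → Z) → H → ℝ) (z : Z) : ℝ :=
  ∑' h : H, jointZH m P Q z h

/-- Marginal of the hypothesis `H` under the joint pmf `jointZH`. -/
noncomputable def margH {Z H : Type*} (m : ℕ) (P : Z → ℝ)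
    (Q : (Fin m → Z) → H → ℝ) (h : H) : ℝ :=
  ∑' z : Z, jointZH m P Q z h

/-- Mutual affinity `I(Z_trn, H) = ‖μ_Z ⊗ μ_H, μ‖`. -/
noncomputable def affinity {Z H : Type*} (m : ℕ) (P : Z → ℝ)
    (Q : (Fin m → Z) → H → ℝ) : ℝ :=
  tv (fun p : Z × H => margZ m P Q p.1 * margH m P Q p.2)
    (fun p : Z × H => jointZH m P Q p.1 p.2)

/-- True risk `R(𝓛) = ∑_S P^{⊗m}(S) ∑_h Q(h|S) ∑_z P(z)·L(h,z)`. -/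
noncomputable def trueRisk {Z H : Type*} (m : ℕ) (P : Z → ℝ)
    (Q : (Fin m → Z) → H → ℝ) (L : H → Z → ℝ) : ℝ :=
  ∑' S : Fin m → Z, prodPMF m P S * ∑' h : H, Q S h * ∑' z : Z, P z * L h z

/-- Empirical risk `R_emp(𝓛) = ∑_S P^{⊗m}(S) ∑_h Q(h|S)·(1/m)∑_i L(h,S_i)`. -/
noncomputable def empRisk {Z H : Type*} (m : ℕ) (P : Z → ℝ)
    (Q : (Fin m → Z) → H → ℝ) (L : H → Z → ℝ) : ℝ :=
  ∑' S : Fin m → Z, prodPMF m P S * ∑' h : H, Q S h * ((1 / (m : ℝ)) * ∑ i, L h (S i))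

/-- Learning capacity `C^(m)(𝓛) = sup_P I(Z_trn, H)`. -/
noncomputable def capacity {Z H : Type*} (m : ℕ)
    (Q : (Fin m → Z) → H → ℝ) : ℝ :=
  sSup {c : ℝ | ∃ P : Z → ℝ, IsPMF P ∧ c = affinity m P Q}

/-!
The `Z_trn`-marginal of the joint pmf is `P` itself, so at `(z, h)` the product of the marginals
and the joint pmf differ by the `Q(h|S)`-weighted mean deviation of the empirical frequency
`N_z(S)/m` from `P z`. Summing over `h` removes `Q`, and Cauchy–Schwarz with the binomial variance
`P z (1 - P z) / m` gives `∑_z E|P z - N_z/m| ≤ ∑_z √(P z / m) ≤ √(|Z| / m)`. Hence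
`I_P(Z_trn, H) ≤ √(|Z| / m) / 2`, which is below the claimed bound since `log (1 + m) ≥ log 2 > 1/2`.
-/

open Finset

theorem IsPMF.sum_eq_one {A : Type*} [Fintype A] {p : A → ℝ} (hp : IsPMF p) :
    ∑ a, p a = 1 :=
  (hasSum_fintype p).unique hp.2

theorem tv_eq_sum_abs_sub_div_two {A : Type*} [Fintype A] {p q : A → ℝ}
    (hp : ∑ a, p a = 1) (hq : ∑ a, q a = 1) : tv p q = (∑ a, |p a - q a|) / 2 := by
  have hmin : ∀ a, min (p a) (q a) = (p a + q a - |p a - q a|) / 2 := fun a => by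
    rcases le_total (p a) (q a) with h | h
    · rw [min_eq_left h, abs_of_nonpos (by linarith)]; ring
    · rw [min_eq_right h, abs_of_nonneg (by linarith)]; ring
  rw [tv, tsum_fintype, sum_congr rfl fun a _ => hmin a, ← sum_div, sum_sub_distrib,
    sum_add_distrib, hp, hq]
  ring

theorem Real.sum_mul_abs_le_sqrt_sum_mul_sq {ι : Type*} (s : Finset ι) {w : ι → ℝ}
    (hw : ∀ i, 0 ≤ w i) (hw1 : ∑ i ∈ s, w i = 1) (f : ι → ℝ) :
    ∑ i ∈ s, w i * |f i| ≤ √(∑ i ∈ s, w i * f i ^ 2) := by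
  have key := Real.sum_sqrt_mul_sqrt_le s hw fun i => mul_nonneg (hw i) (sq_nonneg (f i))
  rwa [hw1, Real.sqrt_one, one_mul, sum_congr rfl fun i _ => by
    rw [← Real.sqrt_mul (hw i), ← mul_assoc, ← sq, ← mul_pow, Real.sqrt_sq_eq_abs,
      abs_mul, abs_of_nonneg (hw i)]] at key

theorem Real.sum_sqrt_le_sqrt_card_mul_sum {ι : Type*} [Fintype ι] {f : ι → ℝ}
    (hf : ∀ i, 0 ≤ f i) : ∑ i, √(f i) ≤ √(Fintype.card ι * ∑ i, f i) := by
  simpa [Real.sqrt_mul (Nat.cast_nonneg _)] using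
    Real.sum_sqrt_mul_sqrt_le univ (fun _ => zero_le_one) hf

theorem Real.sqrt_div_two_le_sqrt_mul_log_div {m : ℕ} (hm : 1 ≤ m) {c : ℝ} (hc : 0 ≤ c) :
    √(c / m) / 2 ≤ √(c * Real.log (1 + m) / (2 * m)) := by
  have hlog : 1 / 2 ≤ Real.log (1 + m) := by
    have h2 : (2 : ℝ) ≤ 1 + m := by norm_cast; omega
    linarith [Real.log_two_gt_d9, Real.log_le_log two_pos h2]
  calc √(c / m) / 2 = √(c * (1 / 2) / (2 * m)) := by
        rw [show c * (1 / 2) / (2 * m) = c / m / 2 ^ 2 by ring,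
          Real.sqrt_div' _ (sq_nonneg 2), Real.sqrt_sq zero_le_two]
    _ ≤ √(c * Real.log (1 + m) / (2 * m)) := by gcongr

theorem prodPMF_nonneg {Z : Type*} {m : ℕ} {P : Z → ℝ} (hP : ∀ z, 0 ≤ P z) (S : Fin m → Z) :
    0 ≤ prodPMF m P S :=
  prod_nonneg fun i _ => hP (S i)

section ProductPMF

variable {Z : Type*} [Fintype Z] {m : ℕ} {P : Z → ℝ}

theorem sum_prodPMF_mul_prod (P : Z → ℝ) (g : Fin m → Z → ℝ) :
    ∑ S, prodPMF m P S * ∏ i, g i (S i) = ∏ i, ∑ z, P z * g i z := by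
  classical
  rw [Fintype.prod_sum]
  simp only [prodPMF, prod_mul_distrib]

theorem sum_prodPMF (hP : ∑ z, P z = 1) : ∑ S, prodPMF m P S = 1 := by
  simpa [hP] using sum_prodPMF_mul_prod (m := m) P fun _ _ => 1

theorem sum_prodPMF_mul_apply (hP : ∑ z, P z = 1) (i : Fin m) (f : Z → ℝ) :
    ∑ S, prodPMF m P S * f (S i) = ∑ z, P z * f z := by
  classical
  simpa [ite_apply, mul_ite, apply_ite (fun g : Z → ℝ => ∑ z, P z * g z), hP] using
    sum_prodPMF_mul_prod P fun k => if k = i then f else 1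

theorem sum_prodPMF_mul_apply_mul_apply (hP : ∑ z, P z = 1) {i j : Fin m} (hij : i ≠ j)
    (f g : Z → ℝ) :
    ∑ S, prodPMF m P S * (f (S i) * g (S j)) = (∑ z, P z * f z) * ∑ z, P z * g z := by
  classical
  have := sum_prodPMF_mul_prod P fun k => (if k = i then f else 1) * (if k = j then g else 1)
  simp only [Pi.mul_apply, ite_apply, Pi.one_apply, prod_mul_distrib, prod_ite_eq', mem_univ,
    if_true] at this
  rw [this, prod_eq_mul i j hij (fun k _ hk => by simp [hk, hP]) (by simp) (by simp)]
  simp [hij, hij.symm]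

theorem sum_prodPMF_mul_sq_sum_of_centered (hP : ∑ z, P z = 1) {φ : Z → ℝ}
    (hφ : ∑ z, P z * φ z = 0) :
    ∑ S, prodPMF m P S * (∑ i, φ (S i)) ^ 2 = m * ∑ z, P z * φ z ^ 2 := by
  have cross : ∀ i j : Fin m, ∑ S, prodPMF m P S * (φ (S i) * φ (S j))
      = if i = j then ∑ z, P z * φ z ^ 2 else 0 := fun i j => by
    split_ifs with hij
    · subst hij; simp_rw [← sq]; exact sum_prodPMF_mul_apply hP i fun z => φ z ^ 2
    · rw [sum_prodPMF_mul_apply_mul_apply hP hij, hφ, zero_mul]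
  calc ∑ S, prodPMF m P S * (∑ i, φ (S i)) ^ 2
      = ∑ i, ∑ j, ∑ S, prodPMF m P S * (φ (S i) * φ (S j)) := by
        simp_rw [sq, sum_mul_sum, mul_sum]
        rw [sum_comm]
        exact sum_congr rfl fun i _ => sum_comm
    _ = m * ∑ z, P z * φ z ^ 2 := by simp [cross]

end ProductPMF

section EmpiricalCount

variable {Z : Type*} [Fintype Z] [DecidableEq Z] {m : ℕ} {P : Z → ℝ}

def empCount (S : Fin m → Z) (z : Z) : ℝ := ∑ i, if S i = z then 1 else 0

theorem sum_empCount (S : Fin m → Z) : ∑ z, empCount S z = m := by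
  simp only [empCount]
  rw [sum_comm]
  simp

theorem sum_prodPMF_mul_empCount (hP : ∑ z, P z = 1) (z : Z) :
    ∑ S, prodPMF m P S * empCount S z = m * P z := by
  have single (i : Fin m) := sum_prodPMF_mul_apply hP i fun w => if w = z then (1 : ℝ) else 0
  simp_rw [empCount, mul_sum]
  rw [sum_comm, sum_congr rfl fun i _ => single i]
  simp

theorem sum_prodPMF_mul_sq_empCount_sub_le (hP0 : ∀ z, 0 ≤ P z) (hP : ∑ z, P z = 1) (z : Z) :
    ∑ S, prodPMF m P S * (empCount S z - m * P z) ^ 2 ≤ m * P z := by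
  set φ : Z → ℝ := fun w => (if w = z then 1 else 0) - P z
  have hdev : ∀ S : Fin m → Z, empCount S z - m * P z = ∑ i, φ (S i) := fun S => by
    simp [φ, empCount, sum_sub_distrib]
  have hφ : ∑ w, P w * φ w = 0 := by
    simp [φ, mul_sub, sum_sub_distrib, ← sum_mul, hP]
  have hφ2 : ∑ w, P w * φ w ^ 2 = P z * (1 - P z) := by
    have : ∀ w, P w * φ w ^ 2 = (1 - 2 * P z) * (if w = z then P w else 0) + P z ^ 2 * P w :=
      fun w => by by_cases hw : w = z <;> simp [φ, hw] <;> ring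
    simp only [this, sum_add_distrib, ← mul_sum, sum_ite_eq', mem_univ, if_true, hP]
    ring
  simp_rw [hdev]
  rw [sum_prodPMF_mul_sq_sum_of_centered hP hφ, hφ2]
  have hz := hP0 z
  gcongr
  nlinarith

theorem sum_prodPMF_mul_abs_sub_empCount_div_le (hP0 : ∀ z, 0 ≤ P z) (hP : ∑ z, P z = 1)
    (hm : m ≠ 0) (z : Z) :
    ∑ S, prodPMF m P S * |P z - empCount S z / m| ≤ √(P z / m) := by
  refine (Real.sum_mul_abs_le_sqrt_sum_mul_sq _ (prodPMF_nonneg hP0) (sum_prodPMF hP) _).trans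
    (Real.sqrt_le_sqrt ?_)
  have hm0 : (0 : ℝ) < m := by positivity
  calc ∑ S, prodPMF m P S * (P z - empCount S z / m) ^ 2
      = (∑ S, prodPMF m P S * (empCount S z - m * P z) ^ 2) / m ^ 2 := by
        rw [sum_div]
        exact sum_congr rfl fun S _ => by field_simp; ring
    _ ≤ m * P z / m ^ 2 := by gcongr; exact sum_prodPMF_mul_sq_empCount_sub_le hP0 hP z
    _ = P z / m := by field_simp

end EmpiricalCount

section LearningMachine

variable {Z H : Type*} [Fintype Z] [Fintype H] [DecidableEq Z] {m : ℕ} {P : Z → ℝ}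
  {Q : (Fin m → Z) → H → ℝ}

omit [Fintype H] in
theorem jointZH_eq_sum (P : Z → ℝ) (Q : (Fin m → Z) → H → ℝ) (z : Z) (h : H) :
    jointZH m P Q z h = ∑ S, prodPMF m P S * (empCount S z / m) * Q S h := by
  rw [jointZH, tsum_fintype]
  refine sum_congr rfl fun S _ => ?_
  rw [one_div_mul_eq_div, empCount]
  -- `jointZH` decides `S i = z` with `Classical.decEq`, `empCount` with the ambient instance
  congr!

omit [Fintype H] in
theorem margH_eq_sum (hm : m ≠ 0) (h : H) :
    margH m P Q h = ∑ S, prodPMF m P S * Q S h := by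
  rw [margH, tsum_fintype]
  simp_rw [jointZH_eq_sum]
  rw [sum_comm]
  refine sum_congr rfl fun S _ => ?_
  rw [← sum_mul, ← mul_sum, ← sum_div, sum_empCount]
  field_simp

theorem margZ_eq (hP : ∑ z, P z = 1) (hQ : ∀ S, ∑ h, Q S h = 1) (hm : m ≠ 0) (z : Z) :
    margZ m P Q z = P z := by
  rw [margZ, tsum_fintype]
  simp_rw [jointZH_eq_sum]
  rw [sum_comm]
  simp_rw [← mul_sum, hQ, mul_one, mul_div_assoc']
  rw [← sum_div, sum_prodPMF_mul_empCount hP]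
  field_simp

theorem abs_margZ_mul_margH_sub_jointZH_le (hP0 : ∀ z, 0 ≤ P z) (hP : ∑ z, P z = 1)
    (hQ0 : ∀ S h, 0 ≤ Q S h) (hQ : ∀ S, ∑ h, Q S h = 1) (hm : m ≠ 0) (z : Z) (h : H) :
    |margZ m P Q z * margH m P Q h - jointZH m P Q z h|
      ≤ ∑ S, prodPMF m P S * Q S h * |P z - empCount S z / m| := by
  rw [margZ_eq hP hQ hm, margH_eq_sum hm, jointZH_eq_sum, mul_sum, ← sum_sub_distrib]
  refine (abs_sum_le_sum_abs _ _).trans_eq (sum_congr rfl fun S _ => ?_)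
  rw [show P z * (prodPMF m P S * Q S h) - prodPMF m P S * (empCount S z / m) * Q S h
      = prodPMF m P S * Q S h * (P z - empCount S z / m) by ring, abs_mul,
    abs_of_nonneg (mul_nonneg (prodPMF_nonneg hP0 S) (hQ0 S h))]

theorem affinity_le_sqrt_card_div (hP : IsPMF P) (hQ : ∀ S, IsPMF (Q S)) (hm : m ≠ 0) :
    affinity m P Q ≤ √(Fintype.card Z / m) / 2 := by
  have hP1 := hP.sum_eq_one
  have hQ1 (S : Fin m → Z) := (hQ S).sum_eq_one
  have hmargZ := margZ_eq (Q := Q) hP1 hQ1 hm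
  have hjoint : ∑ p : Z × H, jointZH m P Q p.1 p.2 = 1 := by
    rw [Fintype.sum_prod_type, ← hP1]
    exact sum_congr rfl fun z _ => by rw [← hmargZ z, margZ, tsum_fintype]
  have hprod : ∑ p : Z × H, margZ m P Q p.1 * margH m P Q p.2 = 1 := by
    simp only [Fintype.sum_prod_type, ← mul_sum, ← sum_mul, hmargZ, hP1, one_mul, margH,
      tsum_fintype]
    rw [sum_comm, ← hjoint, Fintype.sum_prod_type]
  rw [affinity, tv_eq_sum_abs_sub_div_two hprod hjoint]
  gcongr ?_ / 2
  calc ∑ p : Z × H, |margZ m P Q p.1 * margH m P Q p.2 - jointZH m P Q p.1 p.2|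
      ≤ ∑ z, ∑ h, ∑ S, prodPMF m P S * Q S h * |P z - empCount S z / m| := by
        rw [Fintype.sum_prod_type]
        gcongr with z _ h _
        exact abs_margZ_mul_margH_sub_jointZH_le hP.1 hP1 (fun S => (hQ S).1) hQ1 hm z h
    _ = ∑ z, ∑ S, prodPMF m P S * |P z - empCount S z / m| := by
        refine sum_congr rfl fun z _ => ?_
        rw [sum_comm]
        exact sum_congr rfl fun S _ => by rw [← sum_mul, ← mul_sum, hQ1, mul_one]
    _ ≤ ∑ z, √(P z / m) := by
        gcongr with z _
        exact sum_prodPMF_mul_abs_sub_empCount_div_le hP.1 hP1 hm z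
    _ ≤ √(Fintype.card Z / m) := by
        refine (Real.sum_sqrt_le_sqrt_card_mul_sum fun z => ?_).trans_eq ?_
        · exact div_nonneg (hP.1 z) m.cast_nonneg
        · rw [← sum_div, hP1, mul_one_div]

end LearningMachine

theorem stmt17_general {Z H : Type*} [Fintype Z] [Fintype H] (m : ℕ) (hm : 1 ≤ m)
    (Q : (Fin m → Z) → H → ℝ) (hQ : ∀ S, IsPMF (Q S)) :
    (∀ P : Z → ℝ, IsPMF P →
      affinity m P Q ≤
        Real.sqrt ((Fintype.card Z : ℝ) * Real.log (1 + m) / (2 * m))) ∧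
      capacity m Q ≤
        Real.sqrt ((Fintype.card Z : ℝ) * Real.log (1 + m) / (2 * m)) := by
  classical
  have affinity_le (P : Z → ℝ) (hP : IsPMF P) :
      affinity m P Q ≤ Real.sqrt ((Fintype.card Z : ℝ) * Real.log (1 + m) / (2 * m)) :=
    (affinity_le_sqrt_card_div hP hQ (by omega)).trans
      (Real.sqrt_div_two_le_sqrt_mul_log_div hm (Nat.cast_nonneg _))
  refine ⟨affinity_le, Real.sSup_le ?_ (Real.sqrt_nonneg _)⟩
  rintro c ⟨P, hP, rfl⟩
  exact affinity_le P hP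

/-- Corollary 6: for a permutation-invariant learning machine on
a finite observation alphabet `Z` with `|Z| ≥ 1` and finite hypothesis alphabet,
the mutual affinity is at most `√(|Z|·log(1+m)/(2m))` for every pmf `P`, and
hence the learning capacity satisfies the same bound. -/
theorem stmt17 {Z H : Type*} [Fintype Z] [Fintype H] (m : ℕ) (hm : 1 ≤ m)
    (hZ : 1 ≤ Fintype.card Z)
    (Q : (Fin m → Z) → H → ℝ) (hQ : ∀ S, IsPMF (Q S))
    (hperm : ∀ (S : Fin m → Z) (σ : Equiv.Perm (Fin m)), Q (S ∘ σ) = Q S) :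
    (∀ P : Z → ℝ, IsPMF P →
      affinity m P Q ≤
        Real.sqrt ((Fintype.card Z : ℝ) * Real.log (1 + m) / (2 * m))) ∧
      capacity m Q ≤
        Real.sqrt ((Fintype.card Z : ℝ) * Real.log (1 + m) / (2 * m)) :=
  stmt17_general m hm Q hQ
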